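/- arXiv:1902.04544 — 10 statements merged into one kernel-verified Lean document; each statement's English description precedes it below -/
import Mathlib

section
/- Let A be an n×n real matrix all of whose entries are positive. Then there exist positive diagonal n×n matrices X and Y (i.e., diagonal matrices all of whose diagonal entries are positive) such that the matrix XAY is doubly stochastic. -/
open Matrix BigOperators

/-- An `n × n` real matrix is doubly stochastic if all entries are nonnegative and
all row sums and column sums equal `1`. -/
def IsDoublyStochastic {n : ℕ} (S : Matrix (Fin n) (Fin n) ℝ) : Prop :=
  (∀ i j, 0 ≤ S i j) ∧ (∀ i, ∑ j, S i j = 1) ∧ (∀ j, ∑ i, S i j = 1)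

open Finset
noncomputable def skC (n : ℕ) (A : Matrix (Fin n) (Fin n) ℝ) (x : Fin n → ℝ) (j : Fin n) : ℝ :=
  ∑ i, A i j * x i

noncomputable def skF (n : ℕ) (A : Matrix (Fin n) (Fin n) ℝ) (x : Fin n → ℝ) : ℝ :=
  ∑ j, Real.log (skC n A x j) - ∑ i, Real.log (x i)

lemma skC_pos {n : ℕ} [NeZero n] {A : Matrix (Fin n) (Fin n) ℝ} (hA : ∀ i j, 0 < A i j)
    {x : Fin n → ℝ} (hx : ∀ i, 0 < x i) (j : Fin n) : 0 < skC n A x j :=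
  Finset.sum_pos (fun i _ => mul_pos (hA i j) (hx i)) univ_nonempty

lemma skC_smul {n : ℕ} (A : Matrix (Fin n) (Fin n) ℝ) (t : ℝ) (x : Fin n → ℝ) (j : Fin n) :
    skC n A (t • x) j = t * skC n A x j := by
  unfold skC
  rw [Finset.mul_sum]
  exact Finset.sum_congr rfl fun i _ => by simp [smul_eq_mul]; ring

lemma skF_smul {n : ℕ} [NeZero n] {A : Matrix (Fin n) (Fin n) ℝ} (hA : ∀ i j, 0 < A i j)
    {t : ℝ} (ht : 0 < t) {x : Fin n → ℝ} (hx : ∀ i, 0 < x i) :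
    skF n A (t • x) = skF n A x := by
  unfold skF
  have h1 : ∀ j : Fin n, Real.log (skC n A (t • x) j) = Real.log t + Real.log (skC n A x j) := by
    intro j
    rw [skC_smul, Real.log_mul ht.ne' (skC_pos hA hx j).ne']
  have h2 : ∀ i : Fin n, Real.log ((t • x) i) = Real.log t + Real.log (x i) := by
    intro i
    rw [Pi.smul_apply, smul_eq_mul, Real.log_mul ht.ne' (hx i).ne']
  simp only [h1, h2, Finset.sum_add_distrib, Finset.sum_const, card_univ, Fintype.card_fin]
  ring

lemma skF_contOn {n : ℕ} [NeZero n] {A : Matrix (Fin n) (Fin n) ℝ} (hA : ∀ i j, 0 < A i j) :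
    ContinuousOn (skF n A) {x : Fin n → ℝ | ∀ i, 0 < x i} := by
  intro x hx
  apply ContinuousAt.continuousWithinAt
  unfold skF
  apply ContinuousAt.sub
  · apply tendsto_finset_sum
    intro j _
    have hc : ContinuousAt (fun x : Fin n → ℝ => skC n A x j) x := by
      unfold skC
      exact (continuous_finset_sum _ fun i _ => (continuous_const.mul (continuous_apply i))).continuousAt
    exact Filter.Tendsto.comp (Real.continuousAt_log (skC_pos hA hx j).ne') hc
  · exact tendsto_finset_sum _ fun i _ =>
      Filter.Tendsto.comp (Real.continuousAt_log (hx i).ne') (continuous_apply i).continuousAt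

lemma skC_update {n : ℕ} (A : Matrix (Fin n) (Fin n) ℝ) (x : Fin n → ℝ) (i : Fin n) (t : ℝ)
    (j : Fin n) :
    skC n A (Function.update x i t) j = skC n A x j + A i j * (t - x i) := by
  unfold skC
  rw [← Finset.add_sum_erase Finset.univ (fun k => A k j * Function.update x i t k)
        (Finset.mem_univ i),
      ← Finset.add_sum_erase Finset.univ (fun k => A k j * x k) (Finset.mem_univ i)]
  have h : ∑ k ∈ Finset.univ.erase i, A k j * Function.update x i t k
      = ∑ k ∈ Finset.univ.erase i, A k j * x k :=
    Finset.sum_congr rfl fun k hk => by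
      rw [Function.update_of_ne (Finset.ne_of_mem_erase hk)]
  rw [h, Function.update_self]; ring

lemma logsum_update {n : ℕ} (x : Fin n → ℝ) (i : Fin n) (t : ℝ) :
    ∑ k, Real.log (Function.update x i t k)
      = Real.log t + ∑ k ∈ Finset.univ.erase i, Real.log (x k) := by
  rw [← Finset.add_sum_erase Finset.univ (fun k => Real.log (Function.update x i t k))
        (Finset.mem_univ i)]
  congr 1
  · rw [Function.update_self]
  · exact Finset.sum_congr rfl fun k hk => by
      rw [Function.update_of_ne (Finset.ne_of_mem_erase hk)]

lemma skF_hasDerivAt {n : ℕ} [NeZero n] {A : Matrix (Fin n) (Fin n) ℝ} (hA : ∀ i j, 0 < A i j)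
    {x : Fin n → ℝ} (hx : ∀ i, 0 < x i) (i : Fin n) :
    HasDerivAt (fun t => skF n A (Function.update x i t))
      ((∑ j, A i j / skC n A x j) - 1 / x i) (x i) := by
  have hc := skC_pos hA hx
  have hfun : (fun t => skF n A (Function.update x i t))
      = fun t => (∑ j, Real.log (skC n A x j + A i j * (t - x i)))
          - (Real.log t + ∑ k ∈ Finset.univ.erase i, Real.log (x k)) := by
    funext t
    unfold skF
    rw [logsum_update]
    congr 1
    exact Finset.sum_congr rfl fun j _ => by rw [skC_update]
  rw [hfun]
  have h1 : ∀ j ∈ Finset.univ, HasDerivAt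
      (fun t => Real.log (skC n A x j + A i j * (t - x i))) (A i j / skC n A x j) (x i) := by
    intro j _
    have hinner : HasDerivAt (fun t : ℝ => skC n A x j + A i j * (t - x i)) (A i j) (x i) := by
      simpa using (((hasDerivAt_id (x i)).sub_const (x i)).const_mul (A i j)).const_add
        (skC n A x j)
    have hval : skC n A x j + A i j * (x i - x i) = skC n A x j := by ring
    have := (Real.hasDerivAt_log (by rw [hval]; exact (hc j).ne')).comp (x i) hinner
    simpa [hval, div_eq_inv_mul, Function.comp_def] using this
  have h2 : HasDerivAt (fun t : ℝ => Real.log t + ∑ k ∈ Finset.univ.erase i, Real.log (x k))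
      (1 / x i) (x i) := by
    simpa [one_div] using (Real.hasDerivAt_log (hx i).ne').add_const (∑ k ∈ Finset.univ.erase i, Real.log (x k))
  exact (HasDerivAt.fun_sum h1).fun_sub h2

/-- Sinkhorn's theorem: every positive square matrix can be scaled to a doubly
stochastic matrix by positive diagonal matrices. -/
theorem sinkhorn_exists (n : ℕ) (A : Matrix (Fin n) (Fin n) ℝ)
    (hA : ∀ i j, 0 < A i j) :
    ∃ x y : Fin n → ℝ, (∀ i, 0 < x i) ∧ (∀ j, 0 < y j) ∧
      IsDoublyStochastic (Matrix.diagonal x * A * Matrix.diagonal y) := by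
  rcases Nat.eq_zero_or_pos n with hn | hn
  · subst hn
    exact ⟨1, 1, fun i => i.elim0, fun j => j.elim0, fun i j => i.elim0,
      fun i => i.elim0, fun j => j.elim0⟩
  haveI : NeZero n := ⟨hn.ne'⟩
  -- minimum entry of A
  obtain ⟨p, -, hp⟩ := Finset.exists_min_image Finset.univ
    (fun q : Fin n × Fin n => A q.1 q.2) ⟨(⟨0, hn⟩, ⟨0, hn⟩), Finset.mem_univ _⟩
  set a := A p.1 p.2 with ha
  have ha0 : 0 < a := hA _ _
  have hamin : ∀ i j, a ≤ A i j := fun i j => hp (i, j) (Finset.mem_univ _)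
  -- uniform vector
  set u : Fin n → ℝ := fun _ => (n : ℝ)⁻¹ with hu_def
  have hn0 : (0:ℝ) < (n:ℝ) := by exact_mod_cast hn
  have hu : ∀ i, 0 < u i := fun _ => by positivity
  have husum : ∑ i, u i = 1 := by
    simp only [hu_def, Finset.sum_const, Finset.card_univ, Fintype.card_fin, nsmul_eq_mul]
    exact mul_inv_cancel₀ hn0.ne'
  set m := skF n A u with hm
  set δ := min ((n:ℝ)⁻¹) (Real.exp ((n:ℝ) * Real.log a - (m + 1))) with hδ
  have hδ0 : 0 < δ := lt_min (by positivity) (Real.exp_pos _)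
  have hδu : δ ≤ (n:ℝ)⁻¹ := min_le_left _ _
  have hδlog : Real.log δ ≤ (n:ℝ) * Real.log a - (m + 1) := by
    calc Real.log δ ≤ Real.log (Real.exp ((n:ℝ) * Real.log a - (m + 1))) :=
          Real.log_le_log hδ0 (min_le_right _ _)
      _ = (n:ℝ) * Real.log a - (m + 1) := Real.log_exp _
  set K := {x : Fin n → ℝ | (∀ i, δ ≤ x i) ∧ ∑ i, x i = 1} with hK
  have hKpos : ∀ x ∈ K, ∀ i, 0 < x i := fun x hx i => hδ0.trans_le (hx.1 i)
  -- key lower bound on skF on K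
  have hbound : ∀ x ∈ K, ∀ i, (n:ℝ) * Real.log a - Real.log (x i) ≤ skF n A x := by
    intro x hx i
    have hxp := hKpos x hx
    have hx1 : ∀ k, x k ≤ 1 := by
      intro k
      calc x k ≤ ∑ l, x l := Finset.single_le_sum (fun l _ => (hxp l).le) (Finset.mem_univ k)
        _ = 1 := hx.2
    have hlogc : ∀ j, Real.log a ≤ Real.log (skC n A x j) := by
      intro j
      apply Real.log_le_log ha0
      calc a = a * ∑ k, x k := by rw [hx.2]; ring
        _ = ∑ k, a * x k := by rw [Finset.mul_sum]
        _ ≤ ∑ k, A k j * x k :=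
            Finset.sum_le_sum fun k _ => mul_le_mul_of_nonneg_right (hamin k j) (hxp k).le
        _ = skC n A x j := rfl
    have h1 : (n:ℝ) * Real.log a ≤ ∑ j, Real.log (skC n A x j) := by
      calc (n:ℝ) * Real.log a = ∑ _j : Fin n, Real.log a := by
            rw [Finset.sum_const, Finset.card_univ, Fintype.card_fin, nsmul_eq_mul]
        _ ≤ ∑ j, Real.log (skC n A x j) := Finset.sum_le_sum fun j _ => hlogc j
    have h2 : ∑ k, Real.log (x k) ≤ Real.log (x i) := by
      rw [← Finset.add_sum_erase Finset.univ (fun k => Real.log (x k)) (Finset.mem_univ i)]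
      have : ∑ k ∈ Finset.univ.erase i, Real.log (x k) ≤ 0 :=
        Finset.sum_nonpos fun k _ => Real.log_nonpos (hxp k).le (hx1 k)
      linarith
    unfold skF
    linarith
  -- K is compact and nonempty
  have hKclosed : IsClosed K := by
    have : K = (⋂ i, {x : Fin n → ℝ | δ ≤ x i}) ∩ {x : Fin n → ℝ | ∑ i, x i = 1} := by
      ext x; simp [hK, Set.mem_iInter]
    rw [this]
    exact IsClosed.inter (isClosed_iInter fun i => isClosed_le continuous_const
      (continuous_apply i))
      (isClosed_eq (continuous_finset_sum _ fun i _ => continuous_apply i) continuous_const)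
  have hKcomp : IsCompact K := by
    apply IsCompact.of_isClosed_subset (isCompact_Icc
      (a := fun _ : Fin n => δ) (b := fun _ : Fin n => (1:ℝ))) hKclosed
    intro x hx
    constructor
    · intro i; exact hx.1 i
    · intro i
      calc x i ≤ ∑ l, x l :=
            Finset.single_le_sum (fun l _ => (hKpos x hx l).le) (Finset.mem_univ i)
        _ = 1 := hx.2
  have huK : u ∈ K := ⟨fun i => hδu, husum⟩
  obtain ⟨x, hxK, hxmin⟩ := hKcomp.exists_isMinOn ⟨u, huK⟩
    ((skF_contOn hA).mono fun z hz => hKpos z hz)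
  have hxm : skF n A x ≤ m := (isMinOn_iff.mp hxmin) u huK
  have hxpos : ∀ i, 0 < x i := hKpos x hxK
  have hxstrict : ∀ i, δ < x i := by
    intro i
    have h1 := hbound x hxK i
    have h2 : Real.log δ < Real.log (x i) := by linarith
    calc δ = Real.exp (Real.log δ) := (Real.exp_log hδ0).symm
      _ < Real.exp (Real.log (x i)) := Real.exp_lt_exp.mpr h2
      _ = x i := Real.exp_log (hxpos i)
  -- local minimality in the open orthant
  have hc := skC_pos hA hxpos
  have hloc : ∀ i, IsLocalMin (fun t => skF n A (Function.update x i t)) (x i) := by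
    intro i
    have hsum_upd : ∀ t, ∑ k, Function.update x i t k = t + (1 - x i) := by
      intro t
      rw [← Finset.add_sum_erase Finset.univ (fun k => Function.update x i t k)
            (Finset.mem_univ i), Function.update_self]
      have he : ∑ k ∈ Finset.univ.erase i, Function.update x i t k
          = ∑ k ∈ Finset.univ.erase i, x k :=
        Finset.sum_congr rfl fun k hk => by rw [Function.update_of_ne (Finset.ne_of_mem_erase hk)]
      have hx2 : x i + ∑ k ∈ Finset.univ.erase i, x k = 1 := by
        rw [Finset.add_sum_erase Finset.univ x (Finset.mem_univ i)]; exact hxK.2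
      rw [he]; linarith
    have E0 : ∀ᶠ t in nhds (x i), 0 < t := eventually_gt_nhds (hxpos i)
    have E1 : ∀ᶠ t in nhds (x i), 0 < t + (1 - x i) := by
      filter_upwards [eventually_gt_nhds (show x i - 1 < x i by linarith)] with t ht
      linarith
    have E2 : ∀ k, ∀ᶠ t in nhds (x i),
        δ < Function.update x i t k / (t + (1 - x i)) := by
      intro k
      have hg : ContinuousAt (fun t => Function.update x i t k / (t + (1 - x i))) (x i) := by
        apply ContinuousAt.div
        · by_cases hk : k = i
          · subst hk
            simp only [Function.update_self]
            exact continuousAt_id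
          · simp only [Function.update_of_ne hk]
            exact continuousAt_const
        · exact continuousAt_id.add continuousAt_const
        · simp
      have hval : Function.update x i (x i) k / (x i + (1 - x i)) = x k := by
        rw [Function.update_eq_self]; field_simp; ring
      have := hg.tendsto
      rw [hval] at this
      exact this.eventually (eventually_gt_nhds (hxstrict k))
    rw [IsLocalMin, IsMinFilter]
    filter_upwards [E0, E1, (Filter.eventually_all.mpr E2)] with t ht0 hts hgt
    set z := Function.update x i t with hz
    have hzpos : ∀ k, 0 < z k := by
      intro k
      by_cases hk : k = i
      · subst hk; rw [hz, Function.update_self]; exact ht0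
      · rw [hz, Function.update_of_ne hk]; exact hxpos k
    have hs : ∑ k, z k = t + (1 - x i) := hsum_upd t
    have hsinv : 0 < (t + (1 - x i))⁻¹ := inv_pos.mpr hts
    set w := (t + (1 - x i))⁻¹ • z with hw
    have hwK : w ∈ K := by
      constructor
      · intro k
        have := hgt k
        rw [hw, Pi.smul_apply, smul_eq_mul]
        rw [div_eq_inv_mul] at this
        exact this.le
      · rw [hw]
        simp only [Pi.smul_apply, smul_eq_mul, ← Finset.mul_sum]
        rw [hs]
        field_simp
    have hfw : skF n A w = skF n A z := skF_smul hA hsinv hzpos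
    have := (isMinOn_iff.mp hxmin) w hwK
    rw [hfw] at this
    simpa [Function.update_eq_self] using this
  -- derivative is zero at the minimum
  have hrow : ∀ i, ∑ j, A i j / skC n A x j = 1 / x i := by
    intro i
    have h0 := (hloc i).hasDerivAt_eq_zero (skF_hasDerivAt hA hxpos i)
    linarith [h0]
  refine ⟨x, fun j => (skC n A x j)⁻¹, hxpos, fun j => inv_pos.mpr (hc j), ?_, ?_, ?_⟩
  · intro i j
    rw [Matrix.mul_diagonal, Matrix.diagonal_mul]
    exact le_of_lt (mul_pos (mul_pos (hxpos i) (hA i j)) (inv_pos.mpr (hc j)))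
  · intro i
    have : ∀ j, (Matrix.diagonal x * A * Matrix.diagonal fun j => (skC n A x j)⁻¹) i j
        = x i * (A i j / skC n A x j) := by
      intro j
      rw [Matrix.mul_diagonal, Matrix.diagonal_mul, div_eq_mul_inv]; ring
    rw [Finset.sum_congr rfl fun j _ => this j, ← Finset.mul_sum, hrow i, mul_one_div,
      div_self (hxpos i).ne']
  · intro j
    have : ∀ i, (Matrix.diagonal x * A * Matrix.diagonal fun j => (skC n A x j)⁻¹) i j
        = (A i j * x i) * (skC n A x j)⁻¹ := by
      intro i
      rw [Matrix.mul_diagonal, Matrix.diagonal_mul]; ring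
    rw [Finset.sum_congr rfl fun i _ => this i, ← Finset.sum_mul]
    exact mul_inv_cancel₀ (hc j).ne'
end

section
/- Let A be an n×n real matrix all of whose entries are positive. If X, X', Y, Y' are positive diagonal n×n matrices such that both XAY and X'AY' are doubly stochastic, then XAY = X'AY', and there exists a real number λ > 0 such that X' = λX and Y' = λ⁻¹Y. -/
open Matrix BigOperators

lemma sinkhorn_aux_eq {α : Type*} [Fintype α] {f g : α → ℝ}
    (hle : ∀ i, f i ≤ g i) (hsum : ∑ i, f i = ∑ i, g i) (i : α) : f i = g i := by
  by_contra h
  have hlt : f i < g i := lt_of_le_of_ne (hle i) h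
  have := Finset.sum_lt_sum (fun j _ => hle j) ⟨i, Finset.mem_univ i, hlt⟩
  exact absurd hsum (ne_of_lt this)

/-- Uniqueness in Sinkhorn's theorem: if `XAY` and `X'AY'` are both doubly stochastic
with `X, X', Y, Y'` positive diagonal, then `XAY = X'AY'` and `X' = λX`, `Y' = λ⁻¹Y`
for some `λ > 0`. -/
theorem sinkhorn_unique (n : ℕ) (A : Matrix (Fin n) (Fin n) ℝ)
    (hA : ∀ i j, 0 < A i j)
    (x x' y y' : Fin n → ℝ)
    (hx : ∀ i, 0 < x i) (hx' : ∀ i, 0 < x' i)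
    (hy : ∀ j, 0 < y j) (hy' : ∀ j, 0 < y' j)
    (hS : IsDoublyStochastic (Matrix.diagonal x * A * Matrix.diagonal y))
    (hS' : IsDoublyStochastic (Matrix.diagonal x' * A * Matrix.diagonal y')) :
    Matrix.diagonal x * A * Matrix.diagonal y
      = Matrix.diagonal x' * A * Matrix.diagonal y' ∧
    ∃ l : ℝ, 0 < l ∧ (x' = fun i => l * x i) ∧ (y' = fun j => l⁻¹ * y j) := by
  obtain ⟨hS0, hSr, hSc⟩ := hS
  obtain ⟨hS0', hSr', hSc'⟩ := hS'
  rcases Nat.eq_zero_or_pos n with hn | hn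
  · subst hn
    exact ⟨by ext i j; exact i.elim0, 1, one_pos,
      funext fun i => i.elim0, funext fun j => j.elim0⟩
  -- entrywise description of the products
  have hrow : ∀ i, ∑ j, x i * A i j * y j = 1 := by
    intro i; simpa [Matrix.mul_diagonal, Matrix.diagonal_mul] using hSr i
  have hcol : ∀ j, ∑ i, x i * A i j * y j = 1 := by
    intro j; simpa [Matrix.mul_diagonal, Matrix.diagonal_mul] using hSc j
  have hrow' : ∀ i, ∑ j, x' i * A i j * y' j = 1 := by
    intro i; simpa [Matrix.mul_diagonal, Matrix.diagonal_mul] using hSr' i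
  have hcol' : ∀ j, ∑ i, x' i * A i j * y' j = 1 := by
    intro j; simpa [Matrix.mul_diagonal, Matrix.diagonal_mul] using hSc' j
  set r : Fin n → ℝ := fun i => x' i / x i with hr
  set c : Fin n → ℝ := fun j => y' j / y j with hc
  have hx'eq : ∀ i, x' i = r i * x i := fun i =>
    (div_mul_cancel₀ _ (hx i).ne').symm
  have hy'eq : ∀ j, y' j = c j * y j := fun j =>
    (div_mul_cancel₀ _ (hy j).ne').symm
  have hrpos : ∀ i, 0 < r i := fun i => div_pos (hx' i) (hx i)
  have hcpos : ∀ j, 0 < c j := fun j => div_pos (hy' j) (hy j)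
  have hspos : ∀ i j, 0 < x i * A i j * y j := fun i j =>
    mul_pos (mul_pos (hx i) (hA i j)) (hy j)
  obtain ⟨i0, -, hmax⟩ := Finset.exists_max_image Finset.univ r
    ⟨⟨0, hn⟩, Finset.mem_univ _⟩
  set M := r i0 with hM
  have hMpos : 0 < M := hrpos i0
  have hMinv : M * M⁻¹ = 1 := mul_inv_cancel₀ hMpos.ne'
  -- column sums rewritten
  have hcolT : ∀ j, c j * ∑ i, r i * (x i * A i j * y j) = 1 := by
    intro j
    rw [Finset.mul_sum, ← hcol' j]
    exact Finset.sum_congr rfl fun i _ => by rw [hx'eq, hy'eq]; ring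
  have hT_le : ∀ j, ∑ i, r i * (x i * A i j * y j) ≤ M := by
    intro j
    calc ∑ i, r i * (x i * A i j * y j)
        ≤ ∑ i, M * (x i * A i j * y j) :=
          Finset.sum_le_sum fun i _ =>
            mul_le_mul_of_nonneg_right (hmax i (Finset.mem_univ i)) (hspos i j).le
      _ = M := by rw [← Finset.mul_sum, hcol j, mul_one]
  have hc_ge : ∀ j, M⁻¹ ≤ c j := by
    intro j
    have h1 : 1 ≤ c j * M := by
      calc 1 = c j * ∑ i, r i * (x i * A i j * y j) := (hcolT j).symm
        _ ≤ c j * M := mul_le_mul_of_nonneg_left (hT_le j) (hcpos j).le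
    nlinarith [inv_pos.mpr hMpos, hMinv]
  -- row sum at the maximizing index
  have hrow0 : ∑ j, c j * (x i0 * A i0 j * y j) = M⁻¹ := by
    have h1 : M * ∑ j, c j * (x i0 * A i0 j * y j) = 1 := by
      rw [Finset.mul_sum, ← hrow' i0]
      exact Finset.sum_congr rfl fun j _ => by rw [hx'eq, hy'eq, ← hM]; ring
    field_simp at h1 ⊢
    have e : ∀ j, x i0 * c j * A i0 j * y j = c j * x i0 * A i0 j * y j := fun j => by ring
    simp only [e]
    linarith [h1]
  have hsumMinv : ∑ j, M⁻¹ * (x i0 * A i0 j * y j) = M⁻¹ := by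
    rw [← Finset.mul_sum, hrow i0, mul_one]
  have hceq : ∀ j, c j = M⁻¹ := by
    intro j
    have := sinkhorn_aux_eq
      (f := fun j => M⁻¹ * (x i0 * A i0 j * y j))
      (g := fun j => c j * (x i0 * A i0 j * y j))
      (fun j => mul_le_mul_of_nonneg_right (hc_ge j) (hspos i0 j).le)
      (by rw [hsumMinv, hrow0]) j
    exact (mul_right_cancel₀ (hspos i0 j).ne' this.symm)
  -- now all r i = M
  have hreq : ∀ i, r i = M := by
    intro i
    -- fix any column, say j0 := i0 (any j works)
    have hT : ∀ j, ∑ i, r i * (x i * A i j * y j) = M := by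
      intro j
      have h1 := hcolT j
      rw [hceq j] at h1
      have h2 : M * (M⁻¹ * ∑ i, r i * (x i * A i j * y j)) = M * 1 := by rw [h1]
      rw [← mul_assoc, hMinv, one_mul, mul_one] at h2
      exact h2
    have hsumM : ∑ i, M * (x i * A i i0 * y i0) = M := by
      rw [← Finset.mul_sum, hcol i0, mul_one]
    have := sinkhorn_aux_eq
      (f := fun i => r i * (x i * A i i0 * y i0))
      (g := fun i => M * (x i * A i i0 * y i0))
      (fun i => mul_le_mul_of_nonneg_right (hmax i (Finset.mem_univ i)) (hspos i i0).le)
      (by rw [hT i0, hsumM]) i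
    exact mul_right_cancel₀ (hspos i i0).ne' this
  refine ⟨?_, M, hMpos, funext fun i => by rw [hx'eq i, hreq i],
    funext fun j => by rw [hy'eq j, hceq j]⟩
  ext i j
  simp only [Matrix.mul_diagonal, Matrix.diagonal_mul]
  rw [hx'eq i, hy'eq j, hreq i, hceq j]
  have h : M * x i * A i j * (M⁻¹ * y j) = (M * M⁻¹) * (x i * A i j * y j) := by ring
  rw [h, hMinv, one_mul]
end

section
/- Let A be a symmetric n×n real matrix all of whose entries are positive. Then there exists a unique positive diagonal n×n matrix X such that XAX is doubly stochastic. -/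
open Matrix BigOperators

lemma hlow {a : ℝ} (ha : 0 < a) (s : ℝ) : -(1/a) ≤ a * Real.exp (2*s) - 2*s := by
  rcases le_or_gt s 0 with hs | hs
  · nlinarith [Real.exp_pos (2*s), one_div_pos.mpr ha]
  · have h1 : 1 + s ≤ Real.exp s := by linarith [Real.add_one_le_exp s]
    have h2 : Real.exp (2*s) = Real.exp s * Real.exp s := by
      rw [← Real.exp_add]; ring_nf
    have h3 : (1+s)*(1+s) ≤ Real.exp s * Real.exp s := by nlinarith
    have h6 : (1/a) * a = 1 := by field_simp
    rw [h2]
    have key : a * ((1+s)*(1+s)) ≤ a * (Real.exp s * Real.exp s) :=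
      mul_le_mul_of_nonneg_left h3 ha.le
    nlinarith [sq_nonneg (a*s - 1), mul_pos (mul_pos ha ha) hs, mul_pos ha hs, sq_nonneg a]

lemma hcoer {a C s : ℝ} (ha : 0 < a) (h : a * Real.exp (2*s) - 2*s ≤ C) :
    -(max (C/2) (max (C+1) (3/a))) ≤ s ∧ s ≤ max (C/2) (max (C+1) (3/a)) := by
  set R := max (C/2) (max (C+1) (3/a)) with hR
  have hRC2 : C/2 ≤ R := le_max_left _ _
  have hRC1 : C+1 ≤ R := le_trans (le_max_left _ _) (le_max_right _ _)
  have hRa : 3/a ≤ R := le_trans (le_max_right _ _) (le_max_right _ _)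
  constructor
  · have := Real.exp_pos (2*s)
    nlinarith
  · by_contra hcon
    push_neg at hcon
    have hs1 : C + 1 < s := lt_of_le_of_lt hRC1 hcon
    have hs2 : 3/a < s := lt_of_le_of_lt hRa hcon
    have hs0 : 0 < s := lt_of_le_of_lt (by positivity) hs2
    have h3as : 3 < a * s := by
      rw [div_lt_iff₀ ha] at hs2; linarith [hs2]
    have h1 : 1 + s ≤ Real.exp s := by linarith [Real.add_one_le_exp s]
    have h2 : Real.exp (2*s) = Real.exp s * Real.exp s := by
      rw [← Real.exp_add]; ring_nf
    have h3 : (1+s)*(1+s) ≤ Real.exp s * Real.exp s := by nlinarith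
    have key : a * ((1+s)*(1+s)) ≤ a * (Real.exp s * Real.exp s) :=
      mul_le_mul_of_nonneg_left h3 ha.le
    -- a(1+s)^2 - 2s ≥ a + 2as + (as)s - 2s ≥ 3s - 2s = s > C+1
    nlinarith [mul_pos ha hs0, mul_lt_mul_of_pos_right h3as hs0]
lemma sink_unique {n : ℕ} (A : Matrix (Fin n) (Fin n) ℝ)
    (hA : ∀ i j, 0 < A i j)
    (x y : Fin n → ℝ) (hx0 : ∀ i, 0 < x i) (hy0 : ∀ i, 0 < y i)
    (hx : ∀ i, x i * ∑ j, A i j * x j = 1)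
    (hy : ∀ i, y i * ∑ j, A i j * y j = 1) : y = x := by
  rcases Nat.eq_zero_or_pos n with hn | hn
  · subst hn; funext i; exact absurd i.2 (by omega)
  have hne : (Finset.univ : Finset (Fin n)).Nonempty := by
    simpa [Finset.univ_nonempty_iff, Fin.pos_iff_nonempty.mp hn] using Finset.univ_nonempty
  set r : Fin n → ℝ := fun i => y i / x i with hr
  have hr0 : ∀ i, 0 < r i := fun i => div_pos (hy0 i) (hx0 i)
  obtain ⟨i, -, hi⟩ := Finset.exists_max_image Finset.univ r hne
  obtain ⟨k, -, hk⟩ := Finset.exists_min_image Finset.univ r hne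
  have hyx : ∀ i, y i = r i * x i := fun i => (div_mul_cancel₀ (y i) (hx0 i).ne').symm
  -- rewrite hy in terms of x and r
  have key : ∀ m, ∑ j, (A m j * x m * x j) * (r m * r j) = 1 := by
    intro m
    have := hy m
    rw [hyx m] at this
    calc ∑ j, (A m j * x m * x j) * (r m * r j)
        = (r m * x m) * ∑ j, A m j * (r j * x j) := by
          rw [Finset.mul_sum]; exact Finset.sum_congr rfl fun j _ => by ring
      _ = 1 := by simpa [hyx] using this
  have hw : ∀ m, ∑ j, A m j * x m * x j = 1 := by
    intro m
    have h := hx m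
    rw [Finset.mul_sum] at h
    calc ∑ j, A m j * x m * x j = ∑ j, x m * (A m j * x j) :=
          Finset.sum_congr rfl fun j _ => by ring
      _ = 1 := h
  have hwpos : ∀ m j, 0 < A m j * x m * x j := fun m j =>
    mul_pos (mul_pos (hA m j) (hx0 m)) (hx0 j)
  -- claim 1 : 1 ≤ r k * r i
  have c1 : 1 ≤ r k * r i := by
    calc (1:ℝ) = ∑ j, (A k j * x k * x j) * (r k * r j) := (key k).symm
      _ ≤ ∑ j, (A k j * x k * x j) * (r k * r i) := by
          apply Finset.sum_le_sum
          intro j _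
          exact mul_le_mul_of_nonneg_left
            (mul_le_mul_of_nonneg_left (hi j (Finset.mem_univ j)) (hr0 k).le)
            (hwpos k j).le
      _ = r k * r i := by rw [← Finset.sum_mul, hw k, one_mul]
  -- claim 2 : r i * r k ≤ 1, with sandwich
  have c2 : ∑ j, (A i j * x i * x j) * (r i * r k) ≤ ∑ j, (A i j * x i * x j) * (r i * r j) := by
    apply Finset.sum_le_sum
    intro j _
    exact mul_le_mul_of_nonneg_left
      (mul_le_mul_of_nonneg_left (hk j (Finset.mem_univ j)) (hr0 i).le)
      (hwpos i j).le
  have e1 : ∑ j, (A i j * x i * x j) * (r i * r k) = r i * r k := by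
    rw [← Finset.sum_mul, hw i, one_mul]
  have c3 : r i * r k ≤ 1 := by rw [← e1, ← key i]; exact c2
  have heq : r i * r k = 1 := le_antisymm c3 (by linarith [c1, mul_comm (r k) (r i)])
  -- equality forces all r j = r k
  have hsum0 : ∑ j, ((A i j * x i * x j) * (r i * r j) - (A i j * x i * x j) * (r i * r k)) = 0 := by
    rw [Finset.sum_sub_distrib, key i, e1, heq, sub_self]
  have hall : ∀ j, r j = r k := by
    intro j
    have h0 := (Finset.sum_eq_zero_iff_of_nonneg (fun j _ => by
      have : (A i j * x i * x j) * (r i * r k) ≤ (A i j * x i * x j) * (r i * r j) :=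
        mul_le_mul_of_nonneg_left
          (mul_le_mul_of_nonneg_left (hk j (Finset.mem_univ j)) (hr0 i).le)
          (hwpos i j).le
      linarith)).mp hsum0 j (Finset.mem_univ j)
    have hpos : 0 < (A i j * x i * x j) * r i := mul_pos (hwpos i j) (hr0 i)
    nlinarith [hpos]
  have hrk : r k = 1 := by
    have : r i = r k := hall i
    nlinarith [hr0 k, heq]
  funext j
  have : r j = 1 := (hall j).trans hrk
  have := hyx j
  rw [‹r j = 1›] at this
  simpa using this
noncomputable def Gfun {n : ℕ} (A : Matrix (Fin n) (Fin n) ℝ) (t : Fin n → ℝ) : ℝ :=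
  (∑ i, ∑ j, A i j * Real.exp (t i + t j)) - 2 * ∑ i, t i

lemma Gcont {n : ℕ} (A : Matrix (Fin n) (Fin n) ℝ) : Continuous (Gfun A) := by
  unfold Gfun; fun_prop

lemma Gderiv {n : ℕ} (A : Matrix (Fin n) (Fin n) ℝ) (t : Fin n → ℝ) (i : Fin n) :
    HasDerivAt (fun s => Gfun A (Function.update t i s))
      ((∑ j, ∑ l, ((if j = i then (1:ℝ) else 0) + (if l = i then (1:ℝ) else 0)) *
        (A j l * Real.exp (t j + t l))) - 2 * 1) (t i) := by
  unfold Gfun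
  simp only [Function.update_apply]
  apply HasDerivAt.sub
  · apply HasDerivAt.fun_sum
    intro j _
    apply HasDerivAt.fun_sum
    intro l _
    have hd1 : HasDerivAt (fun s : ℝ => if j = i then s else t j)
        (if j = i then (1:ℝ) else 0) (t i) := by
      by_cases hj : j = i
      · simp only [if_pos hj]; exact hasDerivAt_id _
      · simp only [if_neg hj]; exact hasDerivAt_const _ _
    have hd2 : HasDerivAt (fun s : ℝ => if l = i then s else t l)
        (if l = i then (1:ℝ) else 0) (t i) := by
      by_cases hl : l = i
      · simp only [if_pos hl]; exact hasDerivAt_id _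
      · simp only [if_neg hl]; exact hasDerivAt_const _ _
    have hfin := ((hd1.fun_add hd2).exp).const_mul (A j l)
    have harg : ((if j = i then t i else t j) + (if l = i then t i else t l)) = t j + t l := by
      by_cases hj : j = i <;> by_cases hl : l = i <;> simp [hj, hl]
    rw [harg] at hfin
    convert hfin using 1
    · rfl
    ring
  · apply HasDerivAt.const_mul
    have h : HasDerivAt (fun s => ∑ m, if m = i then s else t m)
        (∑ m, if m = i then (1:ℝ) else 0) (t i) := by
      apply HasDerivAt.fun_sum
      intro m _
      by_cases hm : m = i
      · simp only [if_pos hm]; exact hasDerivAt_id _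
      · simp only [if_neg hm]; exact hasDerivAt_const _ _
    convert h using 1
    · rfl
    · rfl
    simp
lemma sink_exists {n : ℕ} (A : Matrix (Fin n) (Fin n) ℝ)
    (hA : ∀ i j, 0 < A i j) (hsymm : A.IsSymm) :
    ∃ x : Fin n → ℝ, (∀ i, 0 < x i) ∧ ∀ i, x i * ∑ j, A i j * x j = 1 := by
  rcases Nat.eq_zero_or_pos n with hn | hn
  · exact ⟨fun _ => 1, fun i => absurd i.2 (by omega), fun i => absurd i.2 (by omega)⟩
  have : NeZero n := ⟨by omega⟩
  have hne : (Finset.univ : Finset (Fin n)).Nonempty := Finset.univ_nonempty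
  set a : ℝ := Finset.univ.inf' hne (fun i => A i i) with haeq
  have ha : 0 < a := by
    rw [haeq, Finset.lt_inf'_iff]; exact fun i _ => hA i i
  have hale : ∀ i, a ≤ A i i := fun i => Finset.inf'_le _ (Finset.mem_univ i)
  -- lower bound : sum of h(t i) ≤ G t
  have hGlb : ∀ t : Fin n → ℝ, ∑ i, (a * Real.exp (2 * t i) - 2 * t i) ≤ Gfun A t := by
    intro t
    unfold Gfun
    rw [Finset.sum_sub_distrib, Finset.mul_sum]
    apply sub_le_sub
    · apply Finset.sum_le_sum
      intro i _
      calc a * Real.exp (2 * t i) ≤ A i i * Real.exp (t i + t i) := by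
            rw [show 2 * t i = t i + t i by ring]
            exact mul_le_mul_of_nonneg_right (hale i) (Real.exp_pos _).le
        _ ≤ ∑ j, A i j * Real.exp (t i + t j) :=
            Finset.single_le_sum (f := fun j => A i j * Real.exp (t i + t j))
              (fun j _ => (mul_pos (hA i j) (Real.exp_pos _)).le) (Finset.mem_univ i)
    · apply Finset.sum_le_sum; intro i _; linarith
  set C : ℝ := Gfun A 0 + (n : ℝ) * (1/a) with hCeq
  set R : ℝ := max (C/2) (max (C+1) (3/a)) with hReq
  have hRpos : 0 < R := lt_of_lt_of_le (by positivity) (le_trans (le_max_right _ _) (le_max_right _ _))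
  -- sublevel property
  have hsub : ∀ t : Fin n → ℝ, Gfun A t ≤ Gfun A 0 → ∀ i, -R ≤ t i ∧ t i ≤ R := by
    intro t ht i
    apply hcoer ha
    have h1 : a * Real.exp (2 * t i) - 2 * t i + 1/a ≤
        ∑ j, ((a * Real.exp (2 * t j) - 2 * t j) + 1/a) := by
      apply Finset.single_le_sum (f := fun j => (a * Real.exp (2 * t j) - 2 * t j) + 1/a)
        (fun j _ => by linarith [hlow ha (t j)]) (Finset.mem_univ i)
    rw [Finset.sum_add_distrib, Finset.sum_const, Finset.card_univ, Fintype.card_fin,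
      nsmul_eq_mul] at h1
    have h2 := hGlb t
    rw [hCeq]
    have h3 : 0 < 1/a := one_div_pos.mpr ha
    linarith
  -- compact set
  set K : Set (Fin n → ℝ) := Set.Icc (fun _ => -R) (fun _ => R) with hKeq
  have hKc : IsCompact K := isCompact_Icc
  have h0K : (0 : Fin n → ℝ) ∈ K :=
    ⟨fun i => by simpa using hRpos.le, fun i => by simpa using hRpos.le⟩
  obtain ⟨t, htK, htmin⟩ := hKc.exists_isMinOn ⟨0, h0K⟩ (Gcont A).continuousOn
  -- global minimum
  have hglob : ∀ u, Gfun A t ≤ Gfun A u := by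
    intro u
    rcases le_or_gt (Gfun A u) (Gfun A 0) with hu | hu
    · have huK : u ∈ K := ⟨fun i => (hsub u hu i).1, fun i => (hsub u hu i).2⟩
      exact htmin huK
    · exact le_trans (htmin h0K) hu.le
  -- derivative zero at each coordinate
  refine ⟨fun i => Real.exp (t i), fun i => Real.exp_pos _, ?_⟩
  intro i
  have hloc : IsLocalMin (fun s => Gfun A (Function.update t i s)) (t i) := by
    apply Filter.Eventually.of_forall
    intro s
    simpa [Function.update_eq_self] using hglob (Function.update t i s)
  have hz := hloc.hasDerivAt_eq_zero (Gderiv A t i)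
  -- simplify the derivative expression
  have hsplit : (∑ j, ∑ l, ((if j = i then (1:ℝ) else 0) + (if l = i then (1:ℝ) else 0)) *
      (A j l * Real.exp (t j + t l))) =
      (∑ l, A i l * Real.exp (t i + t l)) + ∑ j, A j i * Real.exp (t j + t i) := by
    have : ∀ j l, ((if j = i then (1:ℝ) else 0) + (if l = i then (1:ℝ) else 0)) *
        (A j l * Real.exp (t j + t l)) =
        (if j = i then A j l * Real.exp (t j + t l) else 0) +
        (if l = i then A j l * Real.exp (t j + t l) else 0) := by
      intro j l
      by_cases hj : j = i <;> by_cases hl : l = i <;>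
        simp [hj, hl] <;> ring
    simp only [this, Finset.sum_add_distrib]
    congr 1
    · rw [Finset.sum_comm]
      simp [Finset.sum_ite_eq']
    · simp [Finset.sum_ite_eq']
  rw [hsplit] at hz
  have hswap : (∑ j, A j i * Real.exp (t j + t i)) = ∑ l, A i l * Real.exp (t i + t l) := by
    apply Finset.sum_congr rfl
    intro j _
    rw [hsymm.apply, add_comm]
  rw [hswap] at hz
  have hone : (∑ l, A i l * Real.exp (t i + t l)) = 1 := by linarith
  calc Real.exp (t i) * ∑ j, A i j * Real.exp (t j)
      = ∑ l, A i l * Real.exp (t i + t l) := by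
        rw [Finset.mul_sum]
        exact Finset.sum_congr rfl fun j _ => by rw [Real.exp_add]; ring
    _ = 1 := hone
/-- For a positive symmetric matrix `A` there is a unique positive diagonal matrix `X`
such that `XAX` is doubly stochastic. -/
theorem sinkhorn_symmetric (n : ℕ) (A : Matrix (Fin n) (Fin n) ℝ)
    (hA : ∀ i j, 0 < A i j) (hsymm : A.IsSymm) :
    ∃! x : Fin n → ℝ, (∀ i, 0 < x i) ∧
      IsDoublyStochastic (Matrix.diagonal x * A * Matrix.diagonal x) := by
  have hent : ∀ (x : Fin n → ℝ) (i j : Fin n),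
      (Matrix.diagonal x * A * Matrix.diagonal x) i j = x i * A i j * x j := by
    intro x i j
    simp [Matrix.mul_diagonal, Matrix.diagonal_mul]
  have hDS : ∀ x : Fin n → ℝ, (∀ i, x i * ∑ j, A i j * x j = 1) → (∀ i, 0 ≤ x i) →
      IsDoublyStochastic (Matrix.diagonal x * A * Matrix.diagonal x) := by
    intro x hx hx0
    refine ⟨fun i j => by rw [hent]; exact mul_nonneg (mul_nonneg (hx0 i) (hA i j).le) (hx0 j),
      fun i => ?_, fun j => ?_⟩
    · calc ∑ j, (Matrix.diagonal x * A * Matrix.diagonal x) i j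
          = x i * ∑ j, A i j * x j := by
            rw [Finset.mul_sum]
            exact Finset.sum_congr rfl fun j _ => by rw [hent]; ring
        _ = 1 := hx i
    · calc ∑ i, (Matrix.diagonal x * A * Matrix.diagonal x) i j
          = x j * ∑ i, A j i * x i := by
            rw [Finset.mul_sum]
            exact Finset.sum_congr rfl fun i _ => by rw [hent, hsymm.apply]; ring
        _ = 1 := hx j
  have hDS' : ∀ x : Fin n → ℝ, (∀ i, 0 < x i) →
      IsDoublyStochastic (Matrix.diagonal x * A * Matrix.diagonal x) →
      (∀ i, x i * ∑ j, A i j * x j = 1) := by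
    intro x hx0 hds i
    have := hds.2.1 i
    calc x i * ∑ j, A i j * x j
        = ∑ j, (Matrix.diagonal x * A * Matrix.diagonal x) i j := by
          rw [Finset.mul_sum]
          exact Finset.sum_congr rfl fun j _ => by rw [hent]; ring
      _ = 1 := this
  obtain ⟨x, hx0, hx⟩ := sink_exists A hA hsymm
  refine ⟨x, ⟨hx0, hDS x hx fun i => (hx0 i).le⟩, ?_⟩
  intro y ⟨hy0, hyds⟩
  exact sink_unique A hA x y hx0 hy0 hx (hDS' y hy0 hyds)
end

section
/- Let k, ℓ be positive integers, n = k + ℓ, and let M, B, N be positive real numbers with MN ≠ B². Let D = MN/B², and define a = 1/k + (n − √(4kℓD + (k−ℓ)²)) / (2k²(D − 1)), b = (1 − ka)/ℓ, and c = (1 − kb)/ℓ. Let A be the n×n MBN matrix determined by k, ℓ, M, B, N. Then there exist positive real numbers x and y with Mx² = a, Bxy = b, and Ny² = c such that, with X the diagonal matrix whose first k diagonal entries equal x and whose last ℓ diagonal entries equal y, the matrix XAX is doubly stochastic; its (i,j) entry equals a if i ≤ k and j ≤ k, equals c if i > k and j > k, and equals b otherwise. -/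
open Matrix BigOperators

/-- The `MBN` matrix: the symmetric `(k+l) × (k+l)` matrix with value `M` on the upper-left
`k × k` block, `N` on the lower-right `l × l` block, and `B` elsewhere. -/
def MBNMatrix (k l : ℕ) (M B N : ℝ) : Matrix (Fin (k + l)) (Fin (k + l)) ℝ :=
  fun i j =>
    if (i : ℕ) < k then (if (j : ℕ) < k then M else B)
    else (if (j : ℕ) < k then B else N)

lemma sum_ite_lt (k l : ℕ) (hl : 0 < l) (u v : ℝ) :
    ∑ j : Fin (k+l), (if (j:ℕ) < k then u else v) = k*u + l*v := by
  have hkn : k < k + l := by omega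
  rw [Finset.sum_ite, Finset.sum_const, Finset.sum_const]
  have h1 : (Finset.univ.filter (fun j : Fin (k+l) => (j:ℕ) < k)) = Finset.Iio (⟨k, hkn⟩ : Fin (k+l)) := by
    ext j; simp [Fin.lt_def]
  have h2 : (Finset.univ.filter (fun j : Fin (k+l) => ¬ (j:ℕ) < k)) = Finset.Ici (⟨k, hkn⟩ : Fin (k+l)) := by
    ext j; simp [Fin.le_def]
  rw [h1, h2, Fin.card_Iio]
  have h3 : (Finset.Ici (⟨k, hkn⟩ : Fin (k+l))).card = l := by
    rw [Fin.card_Ici]; simp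
  rw [h3]
  push_cast; ring

lemma MBN_aux (K L D s a b c : ℝ) (hK : 0 < K) (hL : 0 < L) (hD0 : 0 < D)
    (hD1 : D ≠ 1) (hs : 0 < s) (hs2 : s ^ 2 = 4 * K * L * D + (K - L) ^ 2)
    (ha : a = 1 / K + ((K + L) - s) / (2 * K ^ 2 * (D - 1)))
    (hb : b = (1 - K * a) / L) (hc : c = (1 - K * b) / L) :
    0 < a ∧ 0 < b ∧ 0 < c ∧ D * b ^ 2 = a * c ∧ K * a + L * b = 1 ∧ K * b + L * c = 1 := by
  have hD1' : D - 1 ≠ 0 := sub_ne_zero.mpr hD1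
  have hK0 : K ≠ 0 := hK.ne'
  have hL0 : L ≠ 0 := hL.ne'
  have hKD : (2:ℝ) * K ^ 2 * (D - 1) ≠ 0 := by
    exact mul_ne_zero (mul_ne_zero two_ne_zero (pow_ne_zero 2 hK0)) hD1'
  have hKLD : (2:ℝ) * K * L * (D - 1) ≠ 0 := by
    exact mul_ne_zero (mul_ne_zero (mul_ne_zero two_ne_zero hK0) hL0) hD1'
  have hLD : (2:ℝ) * L ^ 2 * (D - 1) ≠ 0 := by
    exact mul_ne_zero (mul_ne_zero two_ne_zero (pow_ne_zero 2 hL0)) hD1'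
  have hPs : 0 < 2*K*D - K + L + s := by
    rcases le_or_gt 0 (2*K*D - K + L) with h | h
    · linarith
    · nlinarith [sq_nonneg (2*K*D - K + L + s), mul_pos hK hD0, mul_pos hK hL,
        mul_pos (mul_pos hK hK) hD0, mul_pos (mul_pos hK hD0) hL, mul_pos hs hs]
  have hQs : 0 < 2*L*D + K - L + s := by
    rcases le_or_gt 0 (2*L*D + K - L) with h | h
    · linarith
    · nlinarith [sq_nonneg (2*L*D + K - L + s), mul_pos hL hD0, mul_pos hK hL,
        mul_pos (mul_pos hL hL) hD0, mul_pos (mul_pos hL hD0) hK, mul_pos hs hs]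
  have hns : 0 < s + K + L := by linarith
  have ha' : 2*K^2*(D-1)*a = 2*K*(D-1) + ((K+L) - s) := by
    rw [ha]; field_simp
  have hbL : L*b = 1 - K*a := by rw [hb]; field_simp
  have hcL : L*c = 1 - K*b := by rw [hc]; field_simp
  have hb' : 2*K*L*(D-1)*b = s - (K+L) := by
    linear_combination 2*K*(D-1)*hbL - ha'
  have hc' : 2*L^2*(D-1)*c = 2*L*D + K - L - s := by
    linear_combination 2*L*(D-1)*hcL - hb'
  have ha2 : a * (2*K*D - K + L + s) = 2*D := by
    apply mul_left_cancel₀ hKD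
    linear_combination (2*K*D - K + L + s)*ha' - hs2
  have hb2 : b * (s + K + L) = 2 := by
    apply mul_left_cancel₀ hKLD
    linear_combination (s + K + L)*hb' + hs2
  have hc2 : c * (2*L*D + K - L + s) = 2*D := by
    apply mul_left_cancel₀ hLD
    linear_combination (2*L*D + K - L + s)*hc' - hs2
  have apos : 0 < a := by nlinarith [ha2, mul_pos hPs hD0]
  have bpos : 0 < b := by nlinarith [hb2, hns]
  have cpos : 0 < c := by nlinarith [hc2, mul_pos hQs hD0]
  have hPQ : (2*K*D - K + L + s) * (2*L*D + K - L + s) = D * (s + K + L)^2 := by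
    linear_combination (1 - D) * hs2
  have h4 : a*c*((2*K*D-K+L+s)*(2*L*D+K-L+s)) = 4*D^2 := by
    linear_combination (c*(2*L*D+K-L+s))*ha2 + (2*D)*hc2
  have h5 : D*b^2*(s+K+L)^2 = 4*D := by
    linear_combination (D*b*(s+K+L))*hb2 + (2*D)*hb2
  have key : D * b^2 = a * c := by
    have hX : D*(s+K+L)^2 ≠ 0 := by positivity
    apply mul_right_cancel₀ hX
    linear_combination D*h5 - h4 + (a*c)*hPQ
  refine ⟨apos, bpos, cpos, key, by linarith, by linarith⟩

/-- The explicit Sinkhorn limit of an `MBN` matrix with `MN ≠ B²`. -/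
theorem sinkhorn_MBN (k l : ℕ) (hk : 0 < k) (hl : 0 < l)
    (M B N : ℝ) (hM : 0 < M) (hB : 0 < B) (hN : 0 < N) (hMBN : M * N ≠ B ^ 2)
    (D a b c : ℝ)
    (hD : D = M * N / B ^ 2)
    (ha : a = 1 / (k : ℝ) +
      ((k + l : ℝ) - Real.sqrt (4 * k * l * D + ((k : ℝ) - l) ^ 2)) /
        (2 * (k : ℝ) ^ 2 * (D - 1)))
    (hb : b = (1 - k * a) / l)
    (hc : c = (1 - k * b) / l) :
    ∃ x y : ℝ, 0 < x ∧ 0 < y ∧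
      M * x ^ 2 = a ∧ B * (x * y) = b ∧ N * y ^ 2 = c ∧
      IsDoublyStochastic
        (Matrix.diagonal (fun i : Fin (k + l) => if (i : ℕ) < k then x else y) *
          MBNMatrix k l M B N *
          Matrix.diagonal (fun i : Fin (k + l) => if (i : ℕ) < k then x else y)) ∧
      ∀ i j : Fin (k + l),
        (Matrix.diagonal (fun i : Fin (k + l) => if (i : ℕ) < k then x else y) *
          MBNMatrix k l M B N *
          Matrix.diagonal (fun i : Fin (k + l) => if (i : ℕ) < k then x else y)) i j
          = (if (i : ℕ) < k then (if (j : ℕ) < k then a else b)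
             else (if (j : ℕ) < k then b else c)) := by
  have hK : (0:ℝ) < k := Nat.cast_pos.mpr hk
  have hL : (0:ℝ) < l := Nat.cast_pos.mpr hl
  have hD0 : 0 < D := hD ▸ div_pos (mul_pos hM hN) (pow_pos hB 2)
  have hD1 : D ≠ 1 := by
    intro h
    apply hMBN
    rw [hD] at h
    field_simp at h
    exact h
  have hMN : M * N = D * B ^ 2 := by rw [hD]; field_simp
  have harg : 0 < 4 * (k:ℝ) * l * D + ((k:ℝ) - l) ^ 2 := by
    nlinarith [sq_nonneg ((k:ℝ) - l), mul_pos (mul_pos hK hL) hD0]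
  have hs2 : (Real.sqrt (4 * (k:ℝ) * l * D + ((k:ℝ) - l) ^ 2)) ^ 2
      = 4 * (k:ℝ) * l * D + ((k:ℝ) - l) ^ 2 := Real.sq_sqrt harg.le
  have hs : 0 < Real.sqrt (4 * (k:ℝ) * l * D + ((k:ℝ) - l) ^ 2) := Real.sqrt_pos.mpr harg
  obtain ⟨apos, bpos, cpos, key, ksum, lsum⟩ :=
    MBN_aux (k:ℝ) (l:ℝ) D (Real.sqrt (4 * (k:ℝ) * l * D + ((k:ℝ) - l) ^ 2)) a b c
      hK hL hD0 hD1 hs hs2 ha hb hc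
  -- the scaling factors
  have hxpos : 0 < Real.sqrt (a/M) := Real.sqrt_pos.mpr (div_pos apos hM)
  have hypos : 0 < Real.sqrt (c/N) := Real.sqrt_pos.mpr (div_pos cpos hN)
  have hMx : M * (Real.sqrt (a/M))^2 = a := by
    rw [Real.sq_sqrt (div_pos apos hM).le]; field_simp
  have hNy : N * (Real.sqrt (c/N))^2 = c := by
    rw [Real.sq_sqrt (div_pos cpos hN).le]; field_simp
  have hBxy : B * (Real.sqrt (a/M) * Real.sqrt (c/N)) = b := by
    have hsq : (B * (Real.sqrt (a/M) * Real.sqrt (c/N)))^2 = b^2 := by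
      rw [mul_pow, mul_pow, Real.sq_sqrt (div_pos apos hM).le,
        Real.sq_sqrt (div_pos cpos hN).le]
      field_simp
      linear_combination (-(B^2))*key - (b^2)*hMN
    have h1 : 0 < B * (Real.sqrt (a/M) * Real.sqrt (c/N)) := by positivity
    calc B * (Real.sqrt (a/M) * Real.sqrt (c/N))
        = Real.sqrt ((B * (Real.sqrt (a/M) * Real.sqrt (c/N)))^2) := (Real.sqrt_sq h1.le).symm
      _ = Real.sqrt (b^2) := by rw [hsq]
      _ = b := Real.sqrt_sq bpos.le
  set x := Real.sqrt (a/M) with hxdef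
  set y := Real.sqrt (c/N) with hydef
  have hentry : ∀ i j : Fin (k + l),
      (Matrix.diagonal (fun i : Fin (k + l) => if (i : ℕ) < k then x else y) *
        MBNMatrix k l M B N *
        Matrix.diagonal (fun i : Fin (k + l) => if (i : ℕ) < k then x else y)) i j
        = (if (i : ℕ) < k then (if (j : ℕ) < k then a else b)
           else (if (j : ℕ) < k then b else c)) := by
    intro i j
    rw [Matrix.mul_diagonal, Matrix.diagonal_mul, MBNMatrix]
    split_ifs <;>
      first
        | linear_combination hMx
        | linear_combination hBxy
        | linear_combination hNy
  refine ⟨x, y, hxpos, hypos, hMx, hBxy, hNy, ⟨?_, ?_, ?_⟩, hentry⟩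
  · intro i j
    rw [hentry i j]
    split_ifs <;> linarith
  · intro i
    rw [Finset.sum_congr rfl (fun j _ => hentry i j)]
    by_cases hi : (i:ℕ) < k
    · simp only [if_pos hi]
      rw [sum_ite_lt k l hl a b]
      linarith [ksum]
    · simp only [if_neg hi]
      rw [sum_ite_lt k l hl b c]
      linarith [lsum]
  · intro j
    rw [Finset.sum_congr rfl (fun i _ => hentry i j)]
    by_cases hj : (j:ℕ) < k
    · simp only [if_pos hj]
      rw [sum_ite_lt k l hl a b]
      linarith [ksum]
    · simp only [if_neg hj]
      rw [sum_ite_lt k l hl b c]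
      linarith [lsum]
end

section
/- Let k, ℓ be positive integers with n = k + ℓ. Let M, B, N and M', B', N' be positive real numbers with MN/B² = M'N'/B'², and let A and A' be the n×n MBN matrices determined by (k, ℓ, M, B, N) and (k, ℓ, M', B', N') respectively. If X, Y, X', Y' are positive diagonal n×n matrices such that XAY and X'A'Y' are doubly stochastic, then XAY = X'A'Y'. (That is, the Sinkhorn limit of an MBN matrix depends only on the ratio MN/B².) -/
/-!
Sinkhorn scaling preserves the block structure: rows (columns) of an MBN matrix in the same block
are equal, so the row (column) scaling factors agree on each block, and the doubly stochastic
scaling is again an MBN matrix with parameters `s, t, v`. Scaling does not change the cross ratio,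
so `s v = r t²` with `r = MN/B²`, and the row sums give `k s + l t = 1 = k t + l v`.
Along these two lines `s` and `v` decrease while `t` increases, so at most one nonnegative
solution has `s v = r t²`.
-/

open Matrix BigOperators

section Scaling

variable {ι ι' R : Type*} [Fintype ι] [Fintype ι'] [DecidableEq ι] [DecidableEq ι'] [Field R]
  {A : Matrix ι ι' R} {x : ι → R} {y : ι' → R}

theorem diagonal_mul_mul_diagonal_apply (i : ι) (j : ι') :
    (diagonal x * A * diagonal y) i j = x i * A i j * y j := by
  rw [mul_diagonal, diagonal_mul]

theorem eq_of_row_eq_of_rowSum_eq_one (h : ∀ i, ∑ j, (diagonal x * A * diagonal y) i j = 1)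
    {i i' : ι} (hA : A i = A i') : x i = x i' := by
  have hrow : ∀ i, x i * ∑ j, A i j * y j = 1 := fun i => by
    simpa only [diagonal_mul_mul_diagonal_apply, Finset.mul_sum, mul_assoc] using h i
  have hi := hrow i
  rw [hA] at hi
  exact mul_right_cancel₀ (right_ne_zero_of_mul_eq_one hi) (hi.trans (hrow i').symm)

theorem eq_of_col_eq_of_colSum_eq_one (h : ∀ j, ∑ i, (diagonal x * A * diagonal y) i j = 1)
    {j j' : ι'} (hA : Aᵀ j = Aᵀ j') : y j = y j' := by
  have hT : diagonal y * Aᵀ * diagonal x = (diagonal x * A * diagonal y)ᵀ := by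
    simp only [transpose_mul, diagonal_transpose, Matrix.mul_assoc]
  refine eq_of_row_eq_of_rowSum_eq_one (A := Aᵀ) (x := y) (y := x) (fun i => ?_) hA
  simpa only [hT, transpose_apply] using h i

end Scaling

theorem Fin.sum_ite_lt_add {α : Type*} [AddCommMonoid α] (k l : ℕ) (a b : α) :
    ∑ j : Fin (k + l), (if (j : ℕ) < k then a else b) = k • a + l • b := by
  simp [Fin.sum_univ_add]

theorem le_of_mul_eq_mul_sq_of_add_eq_one {k l r s t v s' t' v' : ℝ}
    (hk : 0 < k) (hl : 0 < l) (hr : 0 ≤ r) (ht : 0 ≤ t) (hs' : 0 ≤ s') (hv' : 0 ≤ v')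
    (h₁ : k * s + l * t = 1) (h₂ : k * t + l * v = 1) (h : s * v = r * t ^ 2)
    (h₁' : k * s' + l * t' = 1) (h₂' : k * t' + l * v' = 1) (h' : s' * v' = r * t' ^ 2) :
    t' ≤ t := by
  by_contra! hlt
  have hs : s' < s := lt_of_mul_lt_mul_left (by linarith [mul_lt_mul_of_pos_left hlt hl]) hk.le
  have hv : v' < v := lt_of_mul_lt_mul_left (by linarith [mul_lt_mul_of_pos_left hlt hk]) hl.le
  have hsv : s' * v' < s * v := mul_lt_mul'' hs hv hs' hv'
  have htt : r * t ^ 2 ≤ r * t' ^ 2 := by gcongr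
  linarith

section MBN

variable {k l : ℕ}

theorem MBNMatrix_apply_eq_of_iff {M B N : ℝ} {i i' j j' : Fin (k + l)}
    (hi : (i : ℕ) < k ↔ (i' : ℕ) < k) (hj : (j : ℕ) < k ↔ (j' : ℕ) < k) :
    MBNMatrix k l M B N i j = MBNMatrix k l M B N i' j' := by
  simp only [MBNMatrix, hi, hj]

theorem MBNMatrix_rowSum (M B N : ℝ) (i : Fin (k + l)) :
    ∑ j, MBNMatrix k l M B N i j = if (i : ℕ) < k then k * M + l * B else k * B + l * N := by
  unfold MBNMatrix
  split_ifs <;> simp [Fin.sum_ite_lt_add]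

theorem IsDoublyStochastic.MBNMatrix_nonneg (hk : 0 < k) (hl : 0 < l) {s t v : ℝ}
    (hS : IsDoublyStochastic (MBNMatrix k l s t v)) : 0 ≤ s ∧ 0 ≤ t ∧ 0 ≤ v := by
  have hs := hS.1 ⟨0, by omega⟩ ⟨0, by omega⟩
  have ht := hS.1 ⟨0, by omega⟩ ⟨k, by omega⟩
  have hv := hS.1 ⟨k, by omega⟩ ⟨k, by omega⟩
  simp only [MBNMatrix, hk, lt_irrefl, if_true, if_false] at hs ht hv
  exact ⟨hs, ht, hv⟩

theorem IsDoublyStochastic.MBNMatrix_sum_eq_one (hk : 0 < k) (hl : 0 < l) {s t v : ℝ}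
    (hS : IsDoublyStochastic (MBNMatrix k l s t v)) :
    k * s + l * t = 1 ∧ k * t + l * v = 1 := by
  have htop := hS.2.1 ⟨0, by omega⟩
  have hbot := hS.2.1 ⟨k, by omega⟩
  simp only [MBNMatrix_rowSum, hk, lt_irrefl, if_true, if_false] at htop hbot
  exact ⟨htop, hbot⟩

theorem exists_MBNMatrix_eq_of_isDoublyStochastic (hk : 0 < k) (hl : 0 < l) {M B N : ℝ}
    {x y : Fin (k + l) → ℝ}
    (hS : IsDoublyStochastic (diagonal x * MBNMatrix k l M B N * diagonal y)) :
    ∃ s t v : ℝ, diagonal x * MBNMatrix k l M B N * diagonal y = MBNMatrix k l s t v ∧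
      s * v * B ^ 2 = M * N * t ^ 2 := by
  set i₀ : Fin (k + l) := ⟨0, by omega⟩
  set i₁ : Fin (k + l) := ⟨k, by omega⟩
  have hi₀ : (i₀ : ℕ) < k := hk
  have hi₁ : ¬ (i₁ : ℕ) < k := lt_irrefl k
  have hx : ∀ i i' : Fin (k + l), ((i : ℕ) < k ↔ (i' : ℕ) < k) → x i = x i' :=
    fun i i' h =>
      eq_of_row_eq_of_rowSum_eq_one hS.2.1 (funext fun _ => MBNMatrix_apply_eq_of_iff h Iff.rfl)
  have hy : ∀ j j' : Fin (k + l), ((j : ℕ) < k ↔ (j' : ℕ) < k) → y j = y j' :=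
    fun j j' h =>
      eq_of_col_eq_of_colSum_eq_one hS.2.2 (funext fun _ => MBNMatrix_apply_eq_of_iff Iff.rfl h)
  have hblocks : diagonal x * MBNMatrix k l M B N * diagonal y = fun i j : Fin (k + l) =>
      if (i : ℕ) < k then (if (j : ℕ) < k then x i₀ * M * y i₀ else x i₀ * B * y i₁)
      else (if (j : ℕ) < k then x i₁ * B * y i₀ else x i₁ * N * y i₁) := by
    ext i j
    rw [diagonal_mul_mul_diagonal_apply]
    by_cases hi : (i : ℕ) < k <;> by_cases hj : (j : ℕ) < k <;>
      simp [MBNMatrix, hi, hj, hi₀, hi₁, hx i i₀, hx i i₁, hy j i₀, hy j i₁]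
  have hrow := hS.2.1 i₀
  have hcol := hS.2.2 i₀
  simp only [hblocks, hi₀, if_true, Fin.sum_ite_lt_add, nsmul_eq_mul] at hrow hcol
  have hsym : x i₁ * B * y i₀ = x i₀ * B * y i₁ :=
    mul_left_cancel₀ (Nat.cast_ne_zero.mpr hl.ne') (by linarith)
  refine ⟨x i₀ * M * y i₀, x i₀ * B * y i₁, x i₁ * N * y i₁, ?_, ?_⟩
  · rw [hblocks, ← hsym]
    ext i j
    simp only [MBNMatrix]
  · linear_combination (M * N * (x i₀ * B * y i₁)) * hsym

theorem MBNMatrix_eq_of_isDoublyStochastic (hk : 0 < k) (hl : 0 < l) {r s t v s' t' v' : ℝ}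
    (hr : 0 ≤ r) (hS : IsDoublyStochastic (MBNMatrix k l s t v))
    (hS' : IsDoublyStochastic (MBNMatrix k l s' t' v'))
    (h : s * v = r * t ^ 2) (h' : s' * v' = r * t' ^ 2) :
    MBNMatrix k l s t v = MBNMatrix k l s' t' v' := by
  have hk' : (0 : ℝ) < k := Nat.cast_pos.mpr hk
  have hl' : (0 : ℝ) < l := Nat.cast_pos.mpr hl
  obtain ⟨h₁, h₂⟩ := hS.MBNMatrix_sum_eq_one hk hl
  obtain ⟨h₁', h₂'⟩ := hS'.MBNMatrix_sum_eq_one hk hl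
  obtain ⟨hs, ht, hv⟩ := hS.MBNMatrix_nonneg hk hl
  obtain ⟨hs', ht', hv'⟩ := hS'.MBNMatrix_nonneg hk hl
  have htt : t = t' := le_antisymm
    (le_of_mul_eq_mul_sq_of_add_eq_one hk' hl' hr ht' hs hv h₁' h₂' h' h₁ h₂ h)
    (le_of_mul_eq_mul_sq_of_add_eq_one hk' hl' hr ht hs' hv' h₁ h₂ h h₁' h₂' h')
  subst htt
  have hss : s = s' := mul_left_cancel₀ hk'.ne' (by linarith)
  have hvv : v = v' := mul_left_cancel₀ hl'.ne' (by linarith)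
  rw [hss, hvv]

end MBN

theorem sinkhorn_MBN_ratio_general (k l : ℕ) (hk : 0 < k) (hl : 0 < l)
    (M B N M' B' N' : ℝ)
    (hM : 0 < M) (hB : 0 < B) (hN : 0 < N)
    (hB' : 0 < B')
    (hratio : M * N / B ^ 2 = M' * N' / B' ^ 2)
    (x y x' y' : Fin (k + l) → ℝ)
    (hS : IsDoublyStochastic
      (Matrix.diagonal x * MBNMatrix k l M B N * Matrix.diagonal y))
    (hS' : IsDoublyStochastic
      (Matrix.diagonal x' * MBNMatrix k l M' B' N' * Matrix.diagonal y')) :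
    Matrix.diagonal x * MBNMatrix k l M B N * Matrix.diagonal y
      = Matrix.diagonal x' * MBNMatrix k l M' B' N' * Matrix.diagonal y' := by
  obtain ⟨s, t, v, hst, hcross⟩ := exists_MBNMatrix_eq_of_isDoublyStochastic hk hl hS
  obtain ⟨s', t', v', hst', hcross'⟩ := exists_MBNMatrix_eq_of_isDoublyStochastic hk hl hS'
  rw [hst] at hS ⊢
  rw [hst'] at hS' ⊢
  refine MBNMatrix_eq_of_isDoublyStochastic hk hl (r := M * N / B ^ 2) (by positivity) hS hS' ?_ ?_
  · field_simp
    linear_combination hcross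
  · rw [hratio]
    field_simp
    linear_combination hcross'

/-- The Sinkhorn limit of an `MBN` matrix depends only on the ratio `MN/B²`. -/
theorem sinkhorn_MBN_ratio (k l : ℕ) (hk : 0 < k) (hl : 0 < l)
    (M B N M' B' N' : ℝ)
    (hM : 0 < M) (hB : 0 < B) (hN : 0 < N)
    (hM' : 0 < M') (hB' : 0 < B') (hN' : 0 < N')
    (hratio : M * N / B ^ 2 = M' * N' / B' ^ 2)
    (x y x' y' : Fin (k + l) → ℝ)
    (hx : ∀ i, 0 < x i) (hy : ∀ j, 0 < y j)
    (hx' : ∀ i, 0 < x' i) (hy' : ∀ j, 0 < y' j)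
    (hS : IsDoublyStochastic
      (Matrix.diagonal x * MBNMatrix k l M B N * Matrix.diagonal y))
    (hS' : IsDoublyStochastic
      (Matrix.diagonal x' * MBNMatrix k l M' B' N' * Matrix.diagonal y')) :
    Matrix.diagonal x * MBNMatrix k l M B N * Matrix.diagonal y
      = Matrix.diagonal x' * MBNMatrix k l M' B' N' * Matrix.diagonal y' :=
  sinkhorn_MBN_ratio_general k l hk hl M B N M' B' N' hM hB hN hB' hratio x y x' y' hS hS'
end

section
/- Let K > 0 with K ≠ 1, and let A₂ be the 3×3 matrix with rows (K, 1, 1), (1, 1, 1), (1, 1, 1). Define a = (2K + 1 − √(8K + 1)) / (2(K − 1)), b = (−3 + √(8K + 1)) / (4(K − 1)), and c = (4K − 1 − √(8K + 1)) / (8(K − 1)). Then there exist positive real numbers x and y such that, with X = diag(x, y, y), the matrix X·A₂·X equals the matrix with rows (a, b, b), (b, c, c), (b, c, c), and this matrix is doubly stochastic. -/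
open Matrix BigOperators

/-! In terms of `s = √(8K + 1)` the constants are `a = (s - 1)/(s + 3)`, `b = 2/(s + 3)` and
`c = (s + 1)/(2(s + 3))`. They are positive since `s > 1`, satisfy `a + 2b = b + 2c = 1`, and
`ac = K b²` because `s² - 1 = 8K`. The last identity makes the system `K x² = a`, `x y = b`,
`y² = c` solvable, and this system says `X A₂ X = [a b b; b c c; b c c]`. -/

namespace Sinkhorn

variable {K s : ℝ}

lemma a_eq (hs : 0 ≤ s) (hsK : s ^ 2 = 8 * K + 1) (hK1 : K ≠ 1) :
    (2 * K + 1 - s) / (2 * (K - 1)) = (s - 1) / (s + 3) := by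
  rw [div_eq_div_iff (mul_ne_zero two_ne_zero (sub_ne_zero.mpr hK1)) (by positivity)]
  linear_combination (-1 : ℝ) * hsK

lemma b_eq (hs : 0 ≤ s) (hsK : s ^ 2 = 8 * K + 1) (hK1 : K ≠ 1) :
    (-3 + s) / (4 * (K - 1)) = 2 / (s + 3) := by
  rw [div_eq_div_iff (mul_ne_zero four_ne_zero (sub_ne_zero.mpr hK1)) (by positivity)]
  linear_combination hsK

lemma c_eq (hs : 0 ≤ s) (hsK : s ^ 2 = 8 * K + 1) (hK1 : K ≠ 1) :
    (4 * K - 1 - s) / (8 * (K - 1)) = (s + 1) / (2 * (s + 3)) := by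
  rw [div_eq_div_iff (mul_ne_zero (by norm_num) (sub_ne_zero.mpr hK1)) (by positivity)]
  linear_combination (-2 : ℝ) * hsK

lemma diagonal_mul_A2_mul_diagonal {R : Type*} [CommRing R] (k x y : R) :
    diagonal ![x, y, y] * !![k, 1, 1; 1, 1, 1; 1, 1, 1] * diagonal ![x, y, y]
      = !![k * x ^ 2, x * y, x * y; x * y, y ^ 2, y ^ 2; x * y, y ^ 2, y ^ 2] := by
  ext i j
  fin_cases i <;> fin_cases j <;> simp <;> ring

end Sinkhorn

lemma exists_pos_of_mul_eq_mul_sq {K a b c : ℝ} (hb : 0 < b) (hc : 0 < c)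
    (habc : a * c = K * b ^ 2) :
    ∃ x y : ℝ, 0 < x ∧ 0 < y ∧ K * x ^ 2 = a ∧ x * y = b ∧ y ^ 2 = c := by
  have hy : 0 < √c := Real.sqrt_pos.mpr hc
  have hyy : √c ^ 2 = c := Real.sq_sqrt hc.le
  refine ⟨b / √c, √c, div_pos hb hy, hy, ?_, div_mul_cancel₀ b hy.ne', hyy⟩
  rw [div_pow, hyy, ← mul_div_assoc, ← habc, mul_div_cancel_right₀ a hc.ne']

lemma isDoublyStochastic_of_add_two_mul_eq_one {a b c : ℝ} (ha : 0 ≤ a) (hb : 0 ≤ b)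
    (hc : 0 ≤ c) (hab : a + 2 * b = 1) (hbc : b + 2 * c = 1) :
    IsDoublyStochastic !![a, b, b; b, c, c; b, c, c] := by
  refine ⟨fun i j => ?_, fun i => ?_, fun j => ?_⟩
  · fin_cases i <;> fin_cases j <;> simpa
  · fin_cases i <;> simp [Fin.sum_univ_three] <;> linarith
  · fin_cases j <;> simp [Fin.sum_univ_three] <;> linarith

/-- The explicit Sinkhorn limit of the matrix `A₂` with rows `(K,1,1), (1,1,1), (1,1,1)`. -/
theorem sinkhorn_A2 (K : ℝ) (hK : 0 < K) (hK1 : K ≠ 1)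
    (a b c : ℝ)
    (ha : a = (2 * K + 1 - Real.sqrt (8 * K + 1)) / (2 * (K - 1)))
    (hb : b = (-3 + Real.sqrt (8 * K + 1)) / (4 * (K - 1)))
    (hc : c = (4 * K - 1 - Real.sqrt (8 * K + 1)) / (8 * (K - 1))) :
    ∃ x y : ℝ, 0 < x ∧ 0 < y ∧
      Matrix.diagonal ![x, y, y] * !![K, 1, 1; 1, 1, 1; 1, 1, 1] *
          Matrix.diagonal ![x, y, y]
        = !![a, b, b; b, c, c; b, c, c] ∧
      IsDoublyStochastic !![a, b, b; b, c, c; b, c, c] := by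
  set s := √(8 * K + 1)
  have hsK : s ^ 2 = 8 * K + 1 := Real.sq_sqrt (by linarith)
  have hs0 : 0 ≤ s := Real.sqrt_nonneg _
  have hs : 1 < s := by nlinarith
  rw [Sinkhorn.a_eq hs0 hsK hK1] at ha
  rw [Sinkhorn.b_eq hs0 hsK hK1] at hb
  rw [Sinkhorn.c_eq hs0 hsK hK1] at hc
  subst ha hb hc
  have habc : (s - 1) / (s + 3) * ((s + 1) / (2 * (s + 3))) = K * (2 / (s + 3)) ^ 2 := by
    field_simp
    linear_combination hsK
  obtain ⟨x, y, hx, hy, hxx, hxy, hyy⟩ :=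
    exists_pos_of_mul_eq_mul_sq (by positivity) (by positivity) habc
  refine ⟨x, y, hx, hy, by rw [Sinkhorn.diagonal_mul_A2_mul_diagonal, hxx, hxy, hyy], ?_⟩
  apply isDoublyStochastic_of_add_two_mul_eq_one
  · exact div_nonneg (by linarith) (by positivity)
  · positivity
  · positivity
  · field_simp; ring
  · field_simp; ring
end

section
/- Let K > 0 with K ≠ 1, and let A₄ be the 3×3 matrix with rows (1, K, K), (K, 1, 1), (K, 1, 1). Define a = (−K² − 2 + K·√(K² + 8)) / (2(K² − 1)), b = (3K² − K·√(K² + 8)) / (4(K² − 1)), and c = (K² − 4 + K·√(K² + 8)) / (8(K² − 1)). Then there exist positive real numbers x and y such that, with X = diag(x, y, y), the matrix X·A₄·X equals the matrix with rows (a, b, b), (b, c, c), (b, c, c), and this matrix is doubly stochastic. -/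
open Matrix BigOperators

private lemma diag3_eq (x y : ℝ) :
    Matrix.diagonal ![x, y, y] = !![x, 0, 0; 0, y, 0; 0, 0, y] := by
  ext i j
  fin_cases i <;> fin_cases j <;>
    simp [Matrix.diagonal_apply, Matrix.vecHead, Matrix.vecTail, Function.comp]

private lemma sandwich_eq (x y K a b c : ℝ) (hxa : x * x = a) (hyc : y * y = c)
    (hxy : x * K * y = b) :
    !![x, 0, 0; 0, y, 0; 0, 0, y] * !![1, K, K; K, 1, 1; K, 1, 1] *
        !![x, 0, 0; 0, y, 0; 0, 0, y] = !![a, b, b; b, c, c; b, c, c] := by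
  rw [Matrix.mul_fin_three, Matrix.mul_fin_three]
  ext i j
  fin_cases i <;> fin_cases j <;> simp [Matrix.vecHead, Matrix.vecTail] <;>
    nlinarith [hxa, hyc, hxy]

private lemma ds_of (a b c : ℝ) (ha0 : 0 ≤ a) (hb0 : 0 ≤ b) (hc0 : 0 ≤ c)
    (h1 : a + 2 * b = 1) (h2 : b + 2 * c = 1) :
    IsDoublyStochastic !![a, b, b; b, c, c; b, c, c] := by
  refine ⟨?_, ?_, ?_⟩
  · intro i j
    fin_cases i <;> fin_cases j <;> simp [Matrix.vecHead, Matrix.vecTail] <;> linarith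
  · intro i
    fin_cases i <;> simp [Fin.sum_univ_three, Matrix.vecHead, Matrix.vecTail] <;> linarith
  · intro j
    fin_cases j <;> simp [Fin.sum_univ_three, Matrix.vecHead, Matrix.vecTail] <;> linarith

/-- The explicit Sinkhorn limit of the matrix `A₄` with rows `(1,K,K), (K,1,1), (K,1,1)`. -/
theorem sinkhorn_A4 (K : ℝ) (hK : 0 < K) (hK1 : K ≠ 1)
    (a b c : ℝ)
    (ha : a = (-K ^ 2 - 2 + K * Real.sqrt (K ^ 2 + 8)) / (2 * (K ^ 2 - 1)))
    (hb : b = (3 * K ^ 2 - K * Real.sqrt (K ^ 2 + 8)) / (4 * (K ^ 2 - 1)))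
    (hc : c = (K ^ 2 - 4 + K * Real.sqrt (K ^ 2 + 8)) / (8 * (K ^ 2 - 1))) :
    ∃ x y : ℝ, 0 < x ∧ 0 < y ∧
      Matrix.diagonal ![x, y, y] * !![1, K, K; K, 1, 1; K, 1, 1] *
          Matrix.diagonal ![x, y, y]
        = !![a, b, b; b, c, c; b, c, c] ∧
      IsDoublyStochastic !![a, b, b; b, c, c; b, c, c] := by
  set s := Real.sqrt (K ^ 2 + 8) with hsdef
  clear_value s
  have hs8 : (0:ℝ) ≤ K ^ 2 + 8 := by positivity
  have hs2 : s ^ 2 = K ^ 2 + 8 := by rw [hsdef]; exact Real.sq_sqrt hs8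
  have hs0 : 0 < s := by rw [hsdef]; exact Real.sqrt_pos.mpr (by positivity)
  -- positivity of a, b, c and denominators
  have hcase := lt_or_gt_of_ne hK1
  have ha0 : 0 < a := by
    rcases hcase with h | h
    · rw [ha]
      apply div_pos_of_neg_of_neg
      · nlinarith [sq_nonneg (K * s - K ^ 2 - 2), mul_pos hK hs0]
      · nlinarith
    · rw [ha]
      apply div_pos
      · nlinarith [sq_nonneg (K * s - K ^ 2 - 2), mul_pos hK hs0]
      · nlinarith
  have hb0 : 0 < b := by
    rcases hcase with h | h
    · rw [hb]
      apply div_pos_of_neg_of_neg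
      · nlinarith [sq_nonneg (K * s - 3 * K ^ 2), mul_pos hK hs0]
      · nlinarith
    · rw [hb]
      apply div_pos
      · nlinarith [sq_nonneg (K * s - 3 * K ^ 2), mul_pos hK hs0]
      · nlinarith
  have hc0 : 0 < c := by
    rcases hcase with h | h
    · rw [hc]
      apply div_pos_of_neg_of_neg
      · nlinarith [sq_nonneg (K * s - (4 - K ^ 2)), mul_pos hK hs0]
      · nlinarith
    · rw [hc]
      apply div_pos
      · nlinarith [sq_nonneg (K * s + (K ^ 2 - 4)), mul_pos hK hs0]
      · nlinarith
  have hden : K ^ 2 - 1 ≠ 0 := by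
    rcases hcase with h | h
    · nlinarith
    · nlinarith
  -- linear identities
  have hsum1 : a + 2 * b = 1 := by
    rw [ha, hb]; field_simp; ring
  have hsum2 : b + 2 * c = 1 := by
    rw [hb, hc]; field_simp; ring
  -- multiplicative identity : b^2 = K^2 * a * c
  have hmul : b ^ 2 = K ^ 2 * a * c := by
    rw [ha, hb, hc]; field_simp; linear_combination (16*(K^2-1)^2 * K^2*(1-K^2) + (16 - 32*K^2 + 48*K^4 - 48*K^6 + 16*K^8)) * hs2
  refine ⟨Real.sqrt a, Real.sqrt c, Real.sqrt_pos.mpr ha0, Real.sqrt_pos.mpr hc0, ?_, ?_⟩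
  · have hxa : Real.sqrt a * Real.sqrt a = a := Real.mul_self_sqrt ha0.le
    have hyc : Real.sqrt c * Real.sqrt c = c := Real.mul_self_sqrt hc0.le
    have hxy : Real.sqrt a * K * Real.sqrt c = b := by
      have h1 : (Real.sqrt a * K * Real.sqrt c) ^ 2 = b ^ 2 := by
        rw [hmul]; ring_nf
        rw [Real.sq_sqrt ha0.le, Real.sq_sqrt hc0.le]; ring
      have h2 : 0 ≤ Real.sqrt a * K * Real.sqrt c := by positivity
      nlinarith [h1, h2, hb0]
    rw [diag3_eq]
    exact sandwich_eq _ _ _ _ _ _ hxa hyc hxy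
  · exact ds_of a b c ha0.le hb0.le hc0.le hsum1 hsum2
end

section
/- Let K > 0 with K ≠ 1, and let A₅ be the 3×3 matrix with rows (K, 1, 1), (1, K, 1), (1, 1, 1). Then there exist positive real numbers x and z with x² = (2K + 1 − √(4K + 5)) / (2(K² − 1)) and z² = (K + 2 − √(4K + 5)) / (K − 1) such that, with X = diag(x, x, z), the matrix X·A₅·X equals the matrix with rows (Kx², x², xz), (x², Kx², xz), (xz, xz, z²), and this matrix is doubly stochastic. -/
open Matrix BigOperators

theorem IsDoublyStochastic.of_transpose_eq {n : ℕ} {S : Matrix (Fin n) (Fin n) ℝ} (hS : Sᵀ = S)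
    (hnonneg : ∀ i j, 0 ≤ S i j) (hrow : ∀ i, ∑ j, S i j = 1) : IsDoublyStochastic S :=
  ⟨hnonneg, hrow, fun j => by rw [← hS] at hrow; exact hrow j⟩

theorem diagonal_mul_A5_mul_diagonal {R : Type*} [CommRing R] (K x z : R) :
    diagonal ![x, x, z] * !![K, 1, 1; 1, K, 1; 1, 1, 1] * diagonal ![x, x, z]
      = !![K * x ^ 2, x ^ 2, x * z; x ^ 2, K * x ^ 2, x * z; x * z, x * z, z ^ 2] := by
  ext i j
  fin_cases i <;> fin_cases j <;> simp [diagonal_mul, mul_diagonal] <;> ring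

theorem isDoublyStochastic_scaled_A5 {K x z : ℝ} (hK : 0 ≤ K) (hxz : 0 ≤ x * z)
    (hrow₁ : (K + 1) * x ^ 2 + x * z = 1) (hrow₃ : 2 * (x * z) + z ^ 2 = 1) :
    IsDoublyStochastic
      !![K * x ^ 2, x ^ 2, x * z; x ^ 2, K * x ^ 2, x * z; x * z, x * z, z ^ 2] := by
  refine .of_transpose_eq ?_ ?_ ?_
  · ext i j
    fin_cases i <;> fin_cases j <;> rfl
  · intro i j
    fin_cases i <;> fin_cases j <;> simp <;> positivity
  · intro i
    fin_cases i <;> simp [Fin.sum_univ_three] <;> linarith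

theorem sub_div_eq_div_add_of_sq_sub_sq {F : Type*} [Field F] {p s q r : F} (hq : q ≠ 0)
    (hps : p + s ≠ 0) (h : p ^ 2 - s ^ 2 = q * r) : (p - s) / q = r / (p + s) := by
  rw [div_eq_div_iff hq hps]
  linear_combination h

theorem exists_pos_sq_eq_of_mul_eq_sq {a b t : ℝ} (ha : 0 < a) (hb : 0 < b) (ht : 0 ≤ t)
    (hab : a * b = t ^ 2) : ∃ x z : ℝ, 0 < x ∧ 0 < z ∧ x ^ 2 = a ∧ z ^ 2 = b ∧ x * z = t :=
  ⟨√a, √b, Real.sqrt_pos.mpr ha, Real.sqrt_pos.mpr hb, Real.sq_sqrt ha.le, Real.sq_sqrt hb.le,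
    by rw [← Real.sqrt_mul ha.le, hab, Real.sqrt_sq ht]⟩

/-- The explicit Sinkhorn limit of the matrix `A₅` with rows `(K,1,1), (1,K,1), (1,1,1)`. -/
theorem sinkhorn_A5 (K : ℝ) (hK : 0 < K) (hK1 : K ≠ 1) :
    ∃ x z : ℝ, 0 < x ∧ 0 < z ∧
      x ^ 2 = (2 * K + 1 - Real.sqrt (4 * K + 5)) / (2 * (K ^ 2 - 1)) ∧
      z ^ 2 = (K + 2 - Real.sqrt (4 * K + 5)) / (K - 1) ∧
      Matrix.diagonal ![x, x, z] * !![K, 1, 1; 1, K, 1; 1, 1, 1] *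
          Matrix.diagonal ![x, x, z]
        = !![K * x ^ 2, x ^ 2, x * z; x ^ 2, K * x ^ 2, x * z; x * z, x * z, z ^ 2] ∧
      IsDoublyStochastic
        !![K * x ^ 2, x ^ 2, x * z; x ^ 2, K * x ^ 2, x * z; x * z, x * z, z ^ 2] := by
  set s := √(4 * K + 5)
  have hs : s ^ 2 = 4 * K + 5 := Real.sq_sqrt (by linarith)
  have hs0 : 0 ≤ s := Real.sqrt_nonneg _
  have hK1' : K - 1 ≠ 0 := sub_ne_zero.mpr hK1
  have hK2 : 2 * (K ^ 2 - 1) ≠ 0 := by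
    rw [show K ^ 2 - 1 = (K - 1) * (K + 1) by ring]
    exact mul_ne_zero two_ne_zero (mul_ne_zero hK1' (by positivity))
  have hx : (2 * K + 1 - s) / (2 * (K ^ 2 - 1)) = 2 / (2 * K + 1 + s) :=
    sub_div_eq_div_add_of_sq_sub_sq hK2 (by positivity) (by linear_combination -hs)
  have hz : (K + 2 - s) / (K - 1) = (K + 1) / (K + 2 + s) :=
    sub_div_eq_div_add_of_sq_sub_sq hK1' (by positivity) (by linear_combination -hs)
  obtain ⟨x, z, hx0, hz0, hx2, hz2, hxz⟩ :=
    exists_pos_sq_eq_of_mul_eq_sq (a := 2 / (2 * K + 1 + s)) (b := (K + 1) / (K + 2 + s))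
      (t := 2 / (s + 3)) (by positivity) (by positivity) (by positivity)
      (by field_simp; linear_combination (K - 1) * hs)
  refine ⟨x, z, hx0, hz0, hx2.trans hx.symm, hz2.trans hz.symm,
    diagonal_mul_A5_mul_diagonal K x z, isDoublyStochastic_scaled_A5 hK.le (by positivity) ?_ ?_⟩
  · rw [hx2, hxz]
    field_simp
    linear_combination -hs
  · rw [hxz, hz2]
    field_simp
    linear_combination -hs
end

section
/- Let K > 0 with K ≠ 1, and let A₆ be the 3×3 matrix with rows (K, K, 1), (K, 1, 1), (1, 1, 1). Set t = K^{1/3} and w = √(1 + t + t²), and put x = 1/(t·w), y = 1/w, z = t/w. Then with X = diag(x, y, z), the matrix X·A₆·X is the circulant matrix with rows (a, b, c), (b, c, a), (c, a, b), where a = (K^{2/3} − K^{1/3})/(K − 1), b = (K − K^{2/3})/(K − 1), c = (K^{1/3} − 1)/(K − 1), and this matrix is doubly stochastic. -/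
open Matrix BigOperators

/-- The explicit Sinkhorn limit of the matrix `A₆` with rows `(K,K,1), (K,1,1), (1,1,1)`:
a circulant matrix whose entries involve the real cube root of `K`. -/
theorem sinkhorn_A6 (K : ℝ) (hK : 0 < K) (hK1 : K ≠ 1)
    (t w x y z a b c : ℝ)
    (ht : t = K ^ ((1 : ℝ) / 3))
    (hw : w = Real.sqrt (1 + t + t ^ 2))
    (hx : x = 1 / (t * w)) (hy : y = 1 / w) (hz : z = t / w)
    (ha : a = (K ^ ((2 : ℝ) / 3) - K ^ ((1 : ℝ) / 3)) / (K - 1))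
    (hb : b = (K - K ^ ((2 : ℝ) / 3)) / (K - 1))
    (hc : c = (K ^ ((1 : ℝ) / 3) - 1) / (K - 1)) :
    Matrix.diagonal ![x, y, z] * !![K, K, 1; K, 1, 1; 1, 1, 1] *
        Matrix.diagonal ![x, y, z]
      = !![a, b, c; b, c, a; c, a, b] ∧
    IsDoublyStochastic !![a, b, c; b, c, a; c, a, b] := by
  have ht0 : 0 < t := ht ▸ Real.rpow_pos_of_pos hK _
  have ht3 : t ^ 3 = K := by
    rw [ht, ← Real.rpow_natCast (K ^ ((1:ℝ)/3)) 3, ← Real.rpow_mul hK.le]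
    norm_num
  have h23 : K ^ ((2:ℝ)/3) = t ^ 2 := by
    rw [ht, ← Real.rpow_natCast (K ^ ((1:ℝ)/3)) 2, ← Real.rpow_mul hK.le]
    norm_num
  have hwsq : w ^ 2 = 1 + t + t ^ 2 := by
    rw [hw, Real.sq_sqrt (by nlinarith)]
  have hw0 : 0 < w := by rw [hw]; exact Real.sqrt_pos.mpr (by nlinarith)
  have htne1 : t ≠ 1 := fun h => hK1 (by rw [← ht3, h]; ring)
  have hKm1 : K - 1 = (t - 1) * w ^ 2 := by rw [hwsq, ← ht3]; ring
  have ht1 : t - 1 ≠ 0 := sub_ne_zero.mpr htne1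
  have hwne : w ≠ 0 := hw0.ne'
  have htne : t ≠ 0 := ht0.ne'
  have ha' : a = t / w ^ 2 := by
    rw [ha, h23, ← ht, hKm1]; field_simp
  have hb' : b = t ^ 2 / w ^ 2 := by
    rw [hb, h23, hKm1, ← ht3]; field_simp
  have hc' : c = 1 / w ^ 2 := by
    rw [hc, ← ht, hKm1]; field_simp
  constructor
  · ext i j
    fin_cases i <;> fin_cases j <;>
      simp [Matrix.mul_apply, Fin.sum_univ_succ, Matrix.diagonal, hx, hy, hz,
        ha', hb', hc', ← ht3] <;> field_simp <;> (first | ring1 | (left; ring1))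
  · have hsum : a + b + c = 1 := by
      rw [ha', hb', hc']
      field_simp
      linarith [hwsq]
    refine ⟨?_, ?_, ?_⟩
    · intro i j
      fin_cases i <;> fin_cases j <;>
        simp [ha', hb', hc'] <;> positivity
    · intro i
      fin_cases i <;> simp [Fin.sum_univ_succ] <;> linarith [hsum]
    · intro j
      fin_cases j <;> simp [Fin.sum_univ_succ] <;> linarith [hsum]
end

section
/- Let K > 0 with K ≠ 1, and let A₇ be the 3×3 matrix with rows (K, K, 1), (K, 1, 1), (1, 1, K). Suppose x, y, z are positive real numbers such that the matrix diag(x, y, z)·A₇·diag(x, y, z) is doubly stochastic. Then x = y / ((K − 1)y² + 1) and y satisfies the polynomial equation (K − 1)³·y⁸ + 3(K − 1)²·y⁶ − (K − 1)(2K − 3)·y⁴ − (4K − 1)·y² + K = 0. -/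
open Matrix BigOperators

/-- For the matrix `A₇` with rows `(K,K,1), (K,1,1), (1,1,K)`: if `diag(x,y,z) A₇ diag(x,y,z)`
is doubly stochastic with `x, y, z > 0`, then `x = y/((K-1)y² + 1)` and `y` is a root of
the octic polynomial `(K-1)³y⁸ + 3(K-1)²y⁶ - (K-1)(2K-3)y⁴ - (4K-1)y² + K`. -/
theorem sinkhorn_A7 (K : ℝ) (hK : 0 < K) (hK1 : K ≠ 1)
    (x y z : ℝ) (hx : 0 < x) (hy : 0 < y) (hz : 0 < z)
    (hS : IsDoublyStochastic
      (Matrix.diagonal ![x, y, z] * !![K, K, 1; K, 1, 1; 1, 1, K] *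
        Matrix.diagonal ![x, y, z])) :
    x = y / ((K - 1) * y ^ 2 + 1) ∧
    (K - 1) ^ 3 * y ^ 8 + 3 * (K - 1) ^ 2 * y ^ 6 - (K - 1) * (2 * K - 3) * y ^ 4
      - (4 * K - 1) * y ^ 2 + K = 0 := by
  obtain ⟨-, hrow, -⟩ := hS
  have e1 := hrow 0
  have e2 := hrow 1
  have e3 := hrow 2
  simp [Matrix.mul_apply, Fin.sum_univ_three, Matrix.diagonal] at e1 e2 e3
  -- eliminate z between rows 1 and 2
  have hxD : x * ((K - 1) * y ^ 2 + 1) = y := by linear_combination y * e1 - x * e2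
  have hD : (K - 1) * y ^ 2 + 1 ≠ 0 := by
    intro h0
    rw [h0, mul_zero] at hxD
    exact absurd hxD.symm (ne_of_gt hy)
  constructor
  · field_simp
    rw [eq_div_iff (by intro h; apply hD; linear_combination h)]; linear_combination hxD
  · linear_combination
      (((K - 1) * y ^ 2 + 1) ^ 2 * y ^ 2) * e3
      - (((K - 1) * y ^ 2 + 1) ^ 2 * (x * y + y ^ 2 + K * (y * z + 1 - K * x * y - y ^ 2))) * e2
      - (y - 2 * y ^ 3 + y ^ 5 - K * y ^ 3 - 2 * K ^ 2 * y + 4 * K ^ 2 * y ^ 3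
          - 3 * K ^ 2 * y ^ 5 - K ^ 3 * y ^ 3 + 2 * K ^ 3 * y ^ 5
          - x * K * y ^ 2 + x * K * y ^ 4 - x * K ^ 2 * y ^ 4 + x * K ^ 3 * y ^ 2
          - x * K ^ 3 * y ^ 4 + x * K ^ 4 * y ^ 4) * hxD
end
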